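/- Let k be an algebraically closed field of characteristic zero, c ∈ k with c ≠ 0, and n an integer with n ≥ 2. Let P_c = MvPolynomial (Fin 3) k with Poisson bracket determined by ⁅u₁,u₂⁆ = 0, ⁅u₂,u₃⁆ = c·u₂u₃, ⁅u₁,u₃⁆ = c·u₁u₃ (via the bivector formula ⁅p,q⁆ = c·u₁u₃·(∂₀p·∂₂q − ∂₂p·∂₀q) + c·u₂u₃·(∂₁p·∂₂q − ∂₂p·∂₁q)), and let Q = MvPolynomial (Fin 3) k with Poisson bracket determined by ⁅v₁,v₂⁆ = 0, ⁅v₂,v₃⁆ = c·v₂v₃, ⁅v₁,v₃⁆ = n·c·v₁v₃ (via ⁅p,q⁆ = n·c·v₁v₃·(∂₀p·∂₂q − ∂₂p·∂₀q) + c·v₂v₃·(∂₁p·∂₂q − ∂₂p·∂₁q)). Then there is no Poisson isomorphism between P_c and Q; that is, P_c^T ≇ P_c where P_c^T = k[u₁ⁿ, u₂, u₃] is the invariant ring of the linear Taft action. -/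
import Mathlib

set_option linter.unusedSectionVars false
open MvPolynomial

/-- The Poisson bracket on `P_c = k[u₁,u₂,u₃]` with
`⁅u₁,u₂⁆ = 0`, `⁅u₂,u₃⁆ = c·u₂u₃`, `⁅u₁,u₃⁆ = c·u₁u₃`. -/
noncomputable def quadBracket {k : Type*} [Field k] (c : k)
    (p q : MvPolynomial (Fin 3) k) : MvPolynomial (Fin 3) k :=
  C c * (X 0 * X 2) * (pderiv 0 p * pderiv 2 q - pderiv 2 p * pderiv 0 q) +
    C c * (X 1 * X 2) * (pderiv 1 p * pderiv 2 q - pderiv 2 p * pderiv 1 q)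

/-- The Poisson bracket on the Taft invariant ring `P_c^T = k[v₁,v₂,v₃]` with
`⁅v₁,v₂⁆ = 0`, `⁅v₂,v₃⁆ = c·v₂v₃`, `⁅v₁,v₃⁆ = n·c·v₁v₃`. -/
noncomputable def quadInvBracket {k : Type*} [Field k] (n : ℕ) (c : k)
    (p q : MvPolynomial (Fin 3) k) : MvPolynomial (Fin 3) k :=
  C ((n : k) * c) * (X 0 * X 2) * (pderiv 0 p * pderiv 2 q - pderiv 2 p * pderiv 0 q) +
    C c * (X 1 * X 2) * (pderiv 1 p * pderiv 2 q - pderiv 2 p * pderiv 1 q)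

section Aux

variable {k : Type*} [Field k] [CharZero k]

/-- The linear part of a polynomial, as a vector of coefficients of `X i`. -/
noncomputable def linPart (p : MvPolynomial (Fin 3) k) : Fin 3 → k :=
  fun i => constantCoeff (pderiv i p)

lemma linPart_mul (u v : MvPolynomial (Fin 3) k) :
    linPart (u * v) = constantCoeff u • linPart v + constantCoeff v • linPart u := by
  funext i
  simp only [linPart, pderiv_mul, map_add, map_mul, Pi.add_apply, Pi.smul_apply, smul_eq_mul]
  ring

lemma linPart_C (r : k) : linPart (C r : MvPolynomial (Fin 3) k) = 0 := by
  funext i; simp [linPart, pderiv_C]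

lemma linPart_X (i : Fin 3) : linPart (X i : MvPolynomial (Fin 3) k) = Pi.single i 1 := by
  funext j
  rcases eq_or_ne i j with h | h
  · subst h; simp [linPart]
  · simp [linPart, pderiv_X_of_ne h, Pi.single_eq_of_ne h.symm]

lemma linPart_aeval_mem (g : Fin 3 → MvPolynomial (Fin 3) k) (p : MvPolynomial (Fin 3) k) :
    linPart (aeval g p) ∈ Submodule.span k {linPart (g 0), linPart (g 1), linPart (g 2)} := by
  induction p using MvPolynomial.induction_on with
  | C r =>
    rw [aeval_C]
    have : (algebraMap k (MvPolynomial (Fin 3) k)) r = C r := rfl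
    rw [this, linPart_C]
    exact Submodule.zero_mem _
  | add p q hp hq =>
    rw [map_add]
    have : linPart (aeval g p + aeval g q) = linPart (aeval g p) + linPart (aeval g q) := by
      funext i; simp [linPart]
    rw [this]
    exact Submodule.add_mem _ hp hq
  | mul_X p i hp =>
    rw [map_mul, aeval_X, linPart_mul]
    refine Submodule.add_mem _ (Submodule.smul_mem _ _ ?_) (Submodule.smul_mem _ _ hp)
    fin_cases i
    · exact Submodule.subset_span (by simp)
    · exact Submodule.subset_span (by simp)
    · exact Submodule.subset_span (by simp)

lemma no_pair_spans (u v : Fin 3 → k)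
    (h : ∀ i : Fin 3, Pi.single i (1 : k) ∈ Submodule.span k {u, v}) : False := by
  classical
  have htop : Submodule.span k ({u, v} : Set (Fin 3 → k)) = ⊤ := by
    refine le_antisymm le_top ?_
    rw [← (Pi.basisFun k (Fin 3)).span_eq, Submodule.span_le]
    rintro x ⟨i, rfl⟩
    simpa using h i
  have hfin := finrank_span_le_card (R := k) ({u, v} : Set (Fin 3 → k))
  have hcard : ({u, v} : Set (Fin 3 → k)).toFinset.card ≤ 2 := by
    rw [Set.toFinset_insert, Set.toFinset_singleton]
    exact (Finset.card_insert_le _ _).trans (by simp)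
  rw [htop, finrank_top] at hfin
  have h3 : Module.finrank k (Fin 3 → k) = 3 := by simp [Module.finrank_pi]
  omega

/-- The substitution killing `X 0` and `X 1`. -/
noncomputable def thXY : MvPolynomial (Fin 3) k →ₐ[k] MvPolynomial (Fin 3) k :=
  aeval ![0, 0, X 2]

/-- The substitution killing `X 2`. -/
noncomputable def thZ : MvPolynomial (Fin 3) k →ₐ[k] MvPolynomial (Fin 3) k :=
  aeval ![X 0, X 1, 0]

lemma thXY_coeffs (p : MvPolynomial (Fin 3) k) :
    constantCoeff (thXY p) = constantCoeff p ∧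
    constantCoeff (pderiv 2 (thXY p)) = constantCoeff (pderiv 2 p) := by
  induction p using MvPolynomial.induction_on with
  | C r => simp [thXY, pderiv_C]
  | add p q hp hq => simp [map_add, hp.1, hp.2, hq.1, hq.2]
  | mul_X p i hp =>
    simp only [thXY, aeval_eq_bind₁] at hp ⊢
    fin_cases i <;>
      simp [map_mul, pderiv_mul, hp.1, hp.2]

lemma thZ_coeffs (p : MvPolynomial (Fin 3) k) :
    constantCoeff (thZ p) = constantCoeff p ∧
    constantCoeff (pderiv 0 (thZ p)) = constantCoeff (pderiv 0 p) ∧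
    constantCoeff (pderiv 1 (thZ p)) = constantCoeff (pderiv 1 p) := by
  induction p using MvPolynomial.induction_on with
  | C r => simp [thZ, pderiv_C]
  | add p q hp hq => simp [map_add, hp.1, hp.2.1, hp.2.2, hq.1, hq.2.1, hq.2.2]
  | mul_X p i hp =>
    simp only [thZ, aeval_eq_bind₁] at hp ⊢
    fin_cases i <;>
      simp [map_mul, pderiv_mul, hp.1, hp.2.1, hp.2.2]

lemma thXY_eps {p : MvPolynomial (Fin 3) k} (h : thXY p = 0) :
    constantCoeff p = 0 ∧ linPart p 2 = 0 := by
  have h1 := (thXY_coeffs p).1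
  have h2 := (thXY_coeffs p).2
  rw [h] at h1 h2
  simp only [map_zero] at h1 h2
  exact ⟨h1.symm, h2.symm⟩

lemma thZ_eps {p : MvPolynomial (Fin 3) k} (h : thZ p = 0) :
    constantCoeff p = 0 ∧ linPart p 0 = 0 ∧ linPart p 1 = 0 := by
  have h1 := (thZ_coeffs p).1
  have h2 := (thZ_coeffs p).2.1
  have h3 := (thZ_coeffs p).2.2
  rw [h] at h1 h2 h3
  simp only [map_zero] at h1 h2 h3
  exact ⟨h1.symm, h2.symm, h3.symm⟩

lemma thXY_bracket (n : ℕ) (c : k) (p q : MvPolynomial (Fin 3) k) :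
    thXY (quadInvBracket n c p q) = 0 := by
  simp [quadInvBracket, thXY, map_add, map_mul, map_sub]

lemma thZ_bracket (n : ℕ) (c : k) (p q : MvPolynomial (Fin 3) k) :
    thZ (quadInvBracket n c p q) = 0 := by
  simp [quadInvBracket, thZ, map_add, map_mul, map_sub]

variable {n : ℕ} {c : k} {p q : MvPolynomial (Fin 3) k}

lemma bracket_eq_xz (h : C c * (p * q) = quadInvBracket n c p q)
    (hp0 : constantCoeff p = 0) (hq0 : constantCoeff q = 0) :
    c * (linPart p 0 * linPart q 2 + linPart p 2 * linPart q 0)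
      = (n : k) * c * (linPart p 0 * linPart q 2 - linPart p 2 * linPart q 0) := by
  have h2 := congrArg (fun r => constantCoeff (pderiv 0 (pderiv 2 r))) h
  simp [quadInvBracket, pderiv_mul, map_add, map_sub, map_mul, pderiv_C,
    constantCoeff_C, constantCoeff_X, hp0, hq0, Pi.single_apply] at h2
  simp only [linPart]
  linear_combination h2

lemma bracket_eq_yz (hc : c ≠ 0) (h : C c * (p * q) = quadInvBracket n c p q)
    (hp0 : constantCoeff p = 0) (hq0 : constantCoeff q = 0) :
    linPart p 2 * linPart q 1 = 0 := by
  have h2 := congrArg (fun r => constantCoeff (pderiv 1 (pderiv 2 r))) h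
  simp [quadInvBracket, pderiv_mul, map_add, map_sub, map_mul, pderiv_C,
    constantCoeff_C, constantCoeff_X, hp0, hq0, Pi.single_apply] at h2
  have h3 : (2 : k) * c * (linPart p 2 * linPart q 1) = 0 := by
    simp only [linPart]
    linear_combination h2
  rcases mul_eq_zero.mp h3 with h4 | h4
  · exact absurd h4 (mul_ne_zero two_ne_zero hc)
  · exact h4

lemma bracket_eq_zz (hc : c ≠ 0) (h : C c * (p * q) = quadInvBracket n c p q)
    (hp0 : constantCoeff p = 0) (hq0 : constantCoeff q = 0) :
    linPart p 2 * linPart q 2 = 0 := by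
  have h2 := congrArg (fun r => constantCoeff (pderiv 2 (pderiv 2 r))) h
  simp [quadInvBracket, pderiv_mul, map_add, map_sub, map_mul, pderiv_C,
    constantCoeff_C, constantCoeff_X, hp0, hq0, Pi.single_apply] at h2
  rcases h2 with h2 | h2
  · exact absurd h2 hc
  · have h3 : (2 : k) * (linPart p 2 * linPart q 2) = 0 := by
      simp only [linPart]
      linear_combination h2
    rcases mul_eq_zero.mp h3 with h4 | h4
    · exact absurd h4 two_ne_zero
    · exact h4

end Aux

set_option maxHeartbeats 1000000 in
/-- The invariant ring `P_c^T` of the linear Taft action is not isomorphic to `P_c`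
as a Poisson algebra, for `c ≠ 0` and `n ≥ 2`. -/
theorem quad_inv_not_poisson_iso {k : Type*} [Field k] [CharZero k] [IsAlgClosed k]
    (c : k) (hc : c ≠ 0) (n : ℕ) (hn : 2 ≤ n) :
    ¬ ∃ ψ : MvPolynomial (Fin 3) k ≃ₐ[k] MvPolynomial (Fin 3) k,
      ∀ p q : MvPolynomial (Fin 3) k,
        ψ (quadBracket c p q) = quadInvBracket n c (ψ p) (ψ q) := by
  rintro ⟨ψ, hψ⟩
  set a : MvPolynomial (Fin 3) k := ψ (X 0) with ha
  set b : MvPolynomial (Fin 3) k := ψ (X 1) with hb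
  set w : MvPolynomial (Fin 3) k := ψ (X 2) with hw
  have hbr02 : quadBracket c (X 0) (X 2) = C c * (X 0 * X 2) := by
    simp [quadBracket]
  have hbr12 : quadBracket c (X 1) (X 2) = C c * (X 1 * X 2) := by
    simp [quadBracket]
  have hCc : ψ (C c) = C c := by
    have h1 : (C c : MvPolynomial (Fin 3) k) = algebraMap k (MvPolynomial (Fin 3) k) c := rfl
    rw [h1, AlgEquiv.commutes]
  have hAC : C c * (a * w) = quadInvBracket n c a w := by
    have h := hψ (X 0) (X 2)
    rw [hbr02, map_mul, map_mul, hCc] at h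
    exact h
  have hBC : C c * (b * w) = quadInvBracket n c b w := by
    have h := hψ (X 1) (X 2)
    rw [hbr12, map_mul, map_mul, hCc] at h
    exact h
  have hCne : (C c : MvPolynomial (Fin 3) k) ≠ 0 := by
    simpa using hc
  have hprod : ∀ (th : MvPolynomial (Fin 3) k →ₐ[k] MvPolynomial (Fin 3) k)
      (p q' : MvPolynomial (Fin 3) k), C c * (p * q') = quadInvBracket n c p q' →
      th (quadInvBracket n c p q') = 0 → th p = 0 ∨ th q' = 0 := by
    intro th p q' hpq h0
    have hth := congrArg th hpq
    rw [h0, map_mul, map_mul] at hth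
    have hthC : th (C c) = C c := by
      have h1 : (C c : MvPolynomial (Fin 3) k) = algebraMap k (MvPolynomial (Fin 3) k) c := rfl
      rw [h1, AlgHom.commutes]
    rw [hthC] at hth
    rcases mul_eq_zero.mp hth with h | h
    · exact absurd h hCne
    · exact mul_eq_zero.mp h
  have hTa := hprod thXY a w hAC (thXY_bracket n c a w)
  have hTb := hprod thXY b w hBC (thXY_bracket n c b w)
  have hSa := hprod thZ a w hAC (thZ_bracket n c a w)
  have hSb := hprod thZ b w hBC (thZ_bracket n c b w)
  have hXmem : ∀ i : Fin 3,
      Pi.single i (1 : k) ∈ Submodule.span k {linPart a, linPart b, linPart w} := by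
    intro i
    have hψeq : (ψ : MvPolynomial (Fin 3) k →ₐ[k] MvPolynomial (Fin 3) k)
        = aeval ![a, b, w] := by
      apply MvPolynomial.algHom_ext
      intro j
      fin_cases j <;> simp [ha, hb, hw]
    have hmem := linPart_aeval_mem ![a, b, w] (ψ.symm (X i))
    have h1 : aeval ![a, b, w] (ψ.symm (X i)) = X i := by
      rw [← hψeq]
      exact ψ.apply_symm_apply (X i)
    rw [h1, linPart_X] at hmem
    simpa using hmem
  have final : ∀ u v : Fin 3 → k,
      linPart a ∈ Submodule.span k {u, v} →
      linPart b ∈ Submodule.span k {u, v} →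
      linPart w ∈ Submodule.span k {u, v} → False := by
    intro u v h1 h2 h3
    refine no_pair_spans u v fun i => ?_
    have hle : Submodule.span k {linPart a, linPart b, linPart w}
        ≤ Submodule.span k {u, v} := by
      rw [Submodule.span_le]
      rintro x hx
      simp only [Set.mem_insert_iff, Set.mem_singleton_iff] at hx
      rcases hx with rfl | rfl | rfl <;> assumption
    exact hle (hXmem i)
  have memL : ∀ u v : Fin 3 → k, u ∈ Submodule.span k {u, v} := fun u v =>
    Submodule.subset_span (by simp)
  have memR : ∀ u v : Fin 3 → k, v ∈ Submodule.span k {u, v} := fun u v =>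
    Submodule.subset_span (by simp)
  have hn1 : (n : k) - 1 ≠ 0 := by
    have h1 : (n : k) ≠ 1 := by
      intro h
      have : n = 1 := by exact_mod_cast h
      omega
    exact sub_ne_zero.mpr h1
  have hn2 : (n : k) + 1 ≠ 0 := by
    have h1 : ((n : k) + 1) = ((n + 1 : ℕ) : k) := by push_cast; ring
    rw [h1]
    exact Nat.cast_ne_zero.mpr (by omega)
  by_cases hTC : thXY w = 0
  · by_cases hSC : thZ w = 0
    · have hLC : linPart w = 0 := by
        funext i
        fin_cases i
        · exact (thZ_eps hSC).2.1
        · exact (thZ_eps hSC).2.2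
        · exact (thXY_eps hTC).2
      exact final (linPart a) (linPart b) (memL _ _) (memR _ _)
        (by rw [hLC]; exact Submodule.zero_mem _)
    · have hSa' : thZ a = 0 := by
        rcases hSa with h | h
        exacts [h, absurd h hSC]
      have ha0 : constantCoeff a = 0 := (thZ_eps hSa').1
      have hA0 : linPart a 0 = 0 := (thZ_eps hSa').2.1
      have hw0 : constantCoeff w = 0 := (thXY_eps hTC).1
      have hG2 : linPart w 2 = 0 := (thXY_eps hTC).2
      by_cases hA2 : linPart a 2 = 0
      · have hLa : linPart a = 0 := by
          funext i
          fin_cases i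
          · exact hA0
          · exact (thZ_eps hSa').2.2
          · exact hA2
        exact final (linPart b) (linPart w)
          (by rw [hLa]; exact Submodule.zero_mem _) (memL _ _) (memR _ _)
      · have exz := bracket_eq_xz hAC ha0 hw0
        have eyz := bracket_eq_yz hc hAC ha0 hw0
        have hG1 : linPart w 1 = 0 := by
          rcases mul_eq_zero.mp eyz with h | h
          exacts [absurd h hA2, h]
        have hG0 : linPart w 0 = 0 := by
          have h5 : ((n : k) + 1) * c * (linPart a 2 * linPart w 0) = 0 := by
            rw [hA0] at exz
            linear_combination exz
          rcases mul_eq_zero.mp h5 with h | h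
          · exact absurd h (mul_ne_zero hn2 hc)
          · rcases mul_eq_zero.mp h with h | h
            exacts [absurd h hA2, h]
        have hLC : linPart w = 0 := by
          funext i
          fin_cases i
          · exact hG0
          · exact hG1
          · exact hG2
        exact final (linPart a) (linPart b) (memL _ _) (memR _ _)
          (by rw [hLC]; exact Submodule.zero_mem _)
  · have hTa' : thXY a = 0 := by
      rcases hTa with h | h
      exacts [h, absurd h hTC]
    have hTb' : thXY b = 0 := by
      rcases hTb with h | h
      exacts [h, absurd h hTC]
    have ha0 : constantCoeff a = 0 := (thXY_eps hTa').1
    have hA2 : linPart a 2 = 0 := (thXY_eps hTa').2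
    have hb0 : constantCoeff b = 0 := (thXY_eps hTb').1
    have hB2 : linPart b 2 = 0 := (thXY_eps hTb').2
    by_cases hSC : thZ w = 0
    · have hw0 : constantCoeff w = 0 := (thZ_eps hSC).1
      have hG0 : linPart w 0 = 0 := (thZ_eps hSC).2.1
      have hG1 : linPart w 1 = 0 := (thZ_eps hSC).2.2
      by_cases hG2 : linPart w 2 = 0
      · have hLC : linPart w = 0 := by
          funext i
          fin_cases i
          · exact hG0
          · exact hG1
          · exact hG2
        exact final (linPart a) (linPart b) (memL _ _) (memR _ _)
          (by rw [hLC]; exact Submodule.zero_mem _)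
      · have exza := bracket_eq_xz hAC ha0 hw0
        have exzb := bracket_eq_xz hBC hb0 hw0
        have hA0 : linPart a 0 = 0 := by
          have h5 : ((n : k) - 1) * c * (linPart a 0 * linPart w 2) = 0 := by
            rw [hA2, hG0] at exza
            linear_combination -exza
          rcases mul_eq_zero.mp h5 with h | h
          · exact absurd h (mul_ne_zero hn1 hc)
          · rcases mul_eq_zero.mp h with h | h
            exacts [h, absurd h hG2]
        have hB0 : linPart b 0 = 0 := by
          have h5 : ((n : k) - 1) * c * (linPart b 0 * linPart w 2) = 0 := by
            rw [hB2, hG0] at exzb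
            linear_combination -exzb
          rcases mul_eq_zero.mp h5 with h | h
          · exact absurd h (mul_ne_zero hn1 hc)
          · rcases mul_eq_zero.mp h with h | h
            exacts [h, absurd h hG2]
        refine final (Pi.single 1 1) (linPart w) ?_ ?_ (memR _ _)
        · refine Submodule.mem_span_pair.mpr ⟨linPart a 1, 0, ?_⟩
          funext i
          fin_cases i <;> simp [Pi.single_apply, hA0, hA2]
        · refine Submodule.mem_span_pair.mpr ⟨linPart b 1, 0, ?_⟩
          funext i
          fin_cases i <;> simp [Pi.single_apply, hB0, hB2]
    · have hSa' : thZ a = 0 := by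
        rcases hSa with h | h
        exacts [h, absurd h hSC]
      have hLa : linPart a = 0 := by
        funext i
        fin_cases i
        · exact (thZ_eps hSa').2.1
        · exact (thZ_eps hSa').2.2
        · exact hA2
      exact final (linPart b) (linPart w)
        (by rw [hLa]; exact Submodule.zero_mem _) (memL _ _) (memR _ _)
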